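/- Let n ≥ 2 and let SU(n) act on su(n) by conjugation. Then the real vector space of symmetric ℝ-bilinear maps ψ : su(n) × su(n) → su(n) satisfying ψ(UXU⁻¹, UYU⁻¹) = U·ψ(X,Y)·U⁻¹ for all U ∈ SU(n) has dimension 0 if n = 2 and dimension 1 if n ≥ 3. -/

import Mathlib

open Matrix

/-- The square complex matrices of size `n`. -/
abbrev Mat (n : ℕ) := Matrix (Fin n) (Fin n) ℂ

/-- `su n`: skew-Hermitian traceless `n × n` complex matrices, as a real subspace of `Mat n`. -/
noncomputable def su (n : ℕ) : Submodule ℝ (Mat n) where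
  carrier := {A | Aᴴ = -A ∧ A.trace = 0}
  add_mem' := by
    rintro a b ⟨ha1, ha2⟩ ⟨hb1, hb2⟩
    exact ⟨by rw [conjTranspose_add, ha1, hb1, neg_add], by rw [trace_add, ha2, hb2, add_zero]⟩
  zero_mem' := ⟨by simp, by simp⟩
  smul_mem' := by
    rintro c a ⟨h1, h2⟩
    exact ⟨by rw [conjTranspose_smul, h1, star_trivial, smul_neg], by rw [trace_smul, h2, smul_zero]⟩

/-- The special unitary group `SU(n)`. -/
abbrev SU (n : ℕ) := Matrix.specialUnitaryGroup (Fin n) ℂ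

lemma SU.star_mul_self {n : ℕ} (U : SU n) : star (U : Mat n) * (U : Mat n) = 1 := U.2.1.1

lemma SU.inv_coe {n : ℕ} (U : SU n) : (U : Mat n)⁻¹ = star (U : Mat n) :=
  Matrix.inv_eq_left_inv (SU.star_mul_self U)

/-- Conjugation `U • A := U * A * U⁻¹` at the level of matrices. -/
noncomputable def conjMat {n : ℕ} (U : SU n) (A : Mat n) : Mat n := (U : Mat n) * A * (U : Mat n)⁻¹

lemma conjMat_mem {n : ℕ} (U : SU n) {A : Mat n} (hA : A ∈ su n) : conjMat U A ∈ su n := by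
  obtain ⟨h1, h2⟩ := hA
  have hs : (U : Mat n) * (star (U : Mat n)) = 1 := by
    rw [mul_eq_one_comm]; exact SU.star_mul_self U
  constructor
  · rw [conjMat, SU.inv_coe, Matrix.star_eq_conjTranspose, conjTranspose_mul, conjTranspose_mul,
      conjTranspose_conjTranspose, h1]
    simp [Matrix.mul_assoc, Matrix.neg_mul, Matrix.mul_neg]
  · rw [conjMat, SU.inv_coe, trace_mul_cycle, SU.star_mul_self U, Matrix.one_mul, h2]

/-- The conjugation action of `SU(n)` on `su(n)`. -/
noncomputable def act {n : ℕ} (U : SU n) (x : su n) : su n := ⟨conjMat U x.1, conjMat_mem U x.2⟩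

lemma act_add {n : ℕ} (U : SU n) (x y : su n) : act U (x + y) = act U x + act U y := by
  apply Subtype.ext
  show conjMat U (x.1 + y.1) = conjMat U x.1 + conjMat U y.1
  simp [conjMat, Matrix.mul_add, Matrix.add_mul]

lemma act_smul {n : ℕ} (U : SU n) (r : ℝ) (x : su n) : act U (r • x) = r • act U x := by
  apply Subtype.ext
  show conjMat U (r • x.1) = r • conjMat U x.1
  simp [conjMat, Matrix.smul_mul, Matrix.mul_smul]

lemma act_zero {n : ℕ} (U : SU n) : act U (0 : su n) = 0 := by
  apply Subtype.ext
  show conjMat U 0 = 0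
  simp [conjMat]

/-- `ψ : su(n) × su(n) → su(n)` is symmetric, ℝ-bilinear and `SU(n)`-equivariant for the
conjugation action. -/
def IsSymmBilEquivSU (n : ℕ) (ψ : ↥(su n) × ↥(su n) → ↥(su n)) : Prop :=
  (∀ x y, ψ (x, y) = ψ (y, x)) ∧
  (∀ x x' y, ψ (x + x', y) = ψ (x, y) + ψ (x', y)) ∧
  (∀ (r : ℝ) x y, ψ (r • x, y) = r • ψ (x, y)) ∧
  (∀ x y y', ψ (x, y + y') = ψ (x, y) + ψ (x, y')) ∧
  (∀ (r : ℝ) x y, ψ (x, r • y) = r • ψ (x, y)) ∧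
  (∀ (U : SU n) x y, ψ (act U x, act U y) = act U (ψ (x, y)))

/-- The real vector space of symmetric bilinear `SU(n)`-equivariant maps
`su(n) × su(n) → su(n)`. -/
noncomputable def EquivBilSpaceSU (n : ℕ) : Submodule ℝ ((↥(su n) × ↥(su n)) → ↥(su n)) where
  carrier := {ψ | IsSymmBilEquivSU n ψ}
  add_mem' := by
    rintro ψ φ ⟨hs, hal, hsl, har, hsr, he⟩ ⟨hs', hal', hsl', har', hsr', he'⟩
    refine ⟨fun x y => ?_, fun x x' y => ?_, fun r x y => ?_, fun x y y' => ?_,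
      fun r x y => ?_, fun U x y => ?_⟩ <;> simp only [Pi.add_apply]
    · rw [hs, hs']
    · rw [hal, hal']; abel
    · rw [hsl, hsl', smul_add]
    · rw [har, har']; abel
    · rw [hsr, hsr', smul_add]
    · rw [he, he', act_add]
  zero_mem' := by
    refine ⟨fun x y => rfl, fun x x' y => ?_, fun r x y => ?_, fun x y y' => ?_,
      fun r x y => ?_, fun U x y => ?_⟩ <;> simp [act_zero]
  smul_mem' := by
    rintro c ψ ⟨hs, hal, hsl, har, hsr, he⟩
    refine ⟨fun x y => ?_, fun x x' y => ?_, fun r x y => ?_, fun x y y' => ?_,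
      fun r x y => ?_, fun U x y => ?_⟩ <;> simp only [Pi.smul_apply]
    · rw [hs]
    · rw [hal, smul_add]
    · rw [hsl, smul_comm]
    · rw [har, smul_add]
    · rw [hsr, smul_comm]
    · rw [he, act_smul]

/-! ### Auxiliary material -/

section Aux

open Complex Equiv

variable {n : ℕ}

/-- Diagonal traceless skew-Hermitian matrix from a real vector. -/
noncomputable def Dmat (d : Fin n → ℝ) : Mat n :=
  Complex.I • Matrix.diagonal (fun j => (d j : ℂ))

lemma Dmat_mem (d : Fin n → ℝ) (h : ∑ j, d j = 0) : Dmat d ∈ su n := by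
  constructor
  · rw [Dmat, conjTranspose_smul, diagonal_conjTranspose]
    have : star (fun j => (d j : ℂ)) = fun j => (d j : ℂ) := by
      funext j; simp [Pi.star_apply, Complex.conj_ofReal]
    rw [this]
    simp
  · rw [Dmat, trace_smul, trace_diagonal]
    have : ∑ j, (d j : ℂ) = ((∑ j, d j : ℝ) : ℂ) := by push_cast; ring
    rw [this, h]
    simp

noncomputable def Dsu (d : Fin n → ℝ) (h : ∑ j, d j = 0) : su n := ⟨Dmat d, Dmat_mem d h⟩

/-- The basic vectors `e a - e b`. -/
def gvec (a b : Fin n) : Fin n → ℝ := fun j =>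
  (if j = a then (1:ℝ) else 0) - (if j = b then (1:ℝ) else 0)

lemma gvec_sum (a b : Fin n) : ∑ j, gvec a b j = 0 := by
  simp [gvec, Finset.sum_sub_distrib]

noncomputable def Dg (a b : Fin n) : su n := Dsu (gvec a b) (gvec_sum a b)

lemma Dg_self (a : Fin n) : Dg a a = 0 := by
  apply Subtype.ext
  show Dmat (gvec a a) = 0
  have : gvec a a = 0 := by funext j; simp [gvec]
  simp [Dmat, this]

lemma Dg_swap (a b : Fin n) : Dg b a = -Dg a b := by
  apply Subtype.ext
  show Dmat (gvec b a) = -(Dmat (gvec a b))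
  have h1 : gvec b a = -gvec a b := by
    funext j; simp only [gvec, Pi.neg_apply]; ring
  rw [h1, Dmat, Dmat]
  ext j k
  by_cases h : j = k <;> simp [Matrix.diagonal_apply, h]

end Aux
section PU

open Complex Equiv

variable {n : ℕ}

/-- Signed permutation matrix. -/
noncomputable def PUmat (σ : Equiv.Perm (Fin n)) (ε : Fin n → ℂ) : Mat n :=
  σ.toPEquiv.toMatrix * Matrix.diagonal ε

lemma permMatrix_conjTranspose (σ : Equiv.Perm (Fin n)) :
    (σ.toPEquiv.toMatrix : Mat n)ᴴ = (σ⁻¹).toPEquiv.toMatrix := by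
  ext j k
  simp only [conjTranspose_apply, PEquiv.toMatrix_apply, Equiv.toPEquiv_apply, Option.mem_def,
    Option.some.injEq]
  by_cases h : σ k = j
  · rw [if_pos h, if_pos (by rw [← h]; simp)]; simp
  · rw [if_neg h, if_neg (by intro hc; apply h; rw [← hc]; simp)]; simp

lemma perm_mul_mul_perm (σ : Equiv.Perm (Fin n)) (M : Mat n) :
    σ.toPEquiv.toMatrix * M * (σ⁻¹).toPEquiv.toMatrix = M.submatrix σ σ := by
  rw [PEquiv.toMatrix_toPEquiv_mul, PEquiv.mul_toMatrix_toPEquiv]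
  ext j k
  simp [Equiv.Perm.inv_def, Equiv.symm_symm]

lemma PUmat_mem (σ : Equiv.Perm (Fin n)) (ε : Fin n → ℂ)
    (hε : ∀ j, ε j * star (ε j) = 1)
    (hdet : ((Equiv.Perm.sign σ : ℤ) : ℂ) * ∏ j, ε j = 1) : PUmat σ ε ∈ SU n := by
  rw [Matrix.mem_specialUnitaryGroup_iff]
  constructor
  · rw [Matrix.mem_unitaryGroup_iff, PUmat, Matrix.star_eq_conjTranspose, conjTranspose_mul,
      diagonal_conjTranspose, permMatrix_conjTranspose]
    have : (σ.toPEquiv.toMatrix : Mat n) * Matrix.diagonal ε *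
        (Matrix.diagonal (star ε) * (σ⁻¹).toPEquiv.toMatrix)
        = σ.toPEquiv.toMatrix * (Matrix.diagonal ε * Matrix.diagonal (star ε)) *
          (σ⁻¹).toPEquiv.toMatrix := by
      noncomm_ring
    rw [this, diagonal_mul_diagonal]
    have h1 : (fun i => ε i * star ε i) = fun _ => (1:ℂ) := by funext j; exact hε j
    rw [h1, Matrix.diagonal_one, Matrix.mul_one, ← PEquiv.toMatrix_trans, ← Equiv.toPEquiv_trans]
    rw [show Equiv.trans σ σ⁻¹ = Equiv.refl (Fin n) from Equiv.self_trans_symm σ,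
      Equiv.toPEquiv_refl, PEquiv.toMatrix_refl]
  · rw [PUmat, Matrix.det_mul, Matrix.det_diagonal]
    rw [show (σ.toPEquiv.toMatrix : Mat n) = σ.permMatrix ℂ from rfl, Matrix.det_permutation]
    simpa using hdet

/-- Signed permutation element of `SU n`. -/
noncomputable def PU (σ : Equiv.Perm (Fin n)) (ε : Fin n → ℂ)
    (hε : ∀ j, ε j * star (ε j) = 1)
    (hdet : ((Equiv.Perm.sign σ : ℤ) : ℂ) * ∏ j, ε j = 1) : SU n :=
  ⟨PUmat σ ε, PUmat_mem σ ε hε hdet⟩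

lemma conjMat_PU_apply (σ : Equiv.Perm (Fin n)) (ε : Fin n → ℂ)
    (hε : ∀ j, ε j * star (ε j) = 1)
    (hdet : ((Equiv.Perm.sign σ : ℤ) : ℂ) * ∏ j, ε j = 1) (A : Mat n) (j k : Fin n) :
    conjMat (PU σ ε hε hdet) A j k = ε (σ j) * A (σ j) (σ k) * star (ε (σ k)) := by
  rw [conjMat, SU.inv_coe]
  show (PUmat σ ε * A * star (PUmat σ ε)) j k = _
  rw [PUmat, Matrix.star_eq_conjTranspose, conjTranspose_mul, diagonal_conjTranspose,
    permMatrix_conjTranspose]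
  have : (σ.toPEquiv.toMatrix : Mat n) * Matrix.diagonal ε * A *
      (Matrix.diagonal (star ε) * (σ⁻¹).toPEquiv.toMatrix)
      = σ.toPEquiv.toMatrix * (Matrix.diagonal ε * A * Matrix.diagonal (star ε)) *
        (σ⁻¹).toPEquiv.toMatrix := by noncomm_ring
  rw [this, perm_mul_mul_perm]
  rw [Matrix.submatrix_apply, Matrix.mul_diagonal, Matrix.diagonal_mul]
  rfl

end PU
section Specials

open Complex Equiv

variable {n : ℕ}

lemma prod_ite_one (a : Fin n) (c : ℂ) :
    (∏ p, (if p = a then c else 1)) = c := by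
  rw [← Finset.mul_prod_erase Finset.univ _ (Finset.mem_univ a), if_pos rfl,
    Finset.prod_eq_one, mul_one]
  intro p hp
  rw [if_neg (Finset.mem_erase.1 hp).1]

lemma prod_ite_two {j k : Fin n} (hjk : j ≠ k) (a b : ℂ) :
    (∏ p, (if p = j then a else if p = k then b else 1)) = a * b := by
  rw [← Finset.mul_prod_erase Finset.univ _ (Finset.mem_univ j), if_pos rfl]
  rw [← Finset.mul_prod_erase _ _ (Finset.mem_erase.2 ⟨Ne.symm hjk, Finset.mem_univ k⟩),
    if_neg (Ne.symm hjk), if_pos rfl]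
  rw [Finset.prod_eq_one, mul_one]
  intro p hp
  simp only [Finset.mem_erase] at hp
  rw [if_neg hp.2.1, if_neg hp.1]

/-- The diagonal `SU` element with `I` at `j`, `-I` at `k` and `1` elsewhere. -/
noncomputable def phaseSU (j k : Fin n) (hjk : j ≠ k) : SU n :=
  PU 1 (fun p => if p = j then Complex.I else if p = k then -Complex.I else 1)
    (by
      intro p
      have key : ∀ z : ℂ, z = Complex.I ∨ z = -Complex.I ∨ z = 1 → z * star z = 1 := by
        rintro z (rfl | rfl | rfl) <;>
          simp [Complex.star_def, Complex.conj_I, Complex.I_mul_I]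
      apply key
      by_cases h1 : p = j
      · left; simp [h1]
      · by_cases h2 : p = k
        · right; left; subst h2; simp [h1]
        · right; right; simp [h1, h2])
    (by
      rw [prod_ite_two hjk]
      simp [Complex.I_mul_I])

/-- The signed transposition `SU` element for `a ≠ b`. -/
noncomputable def swapSU (a b : Fin n) (hab : a ≠ b) : SU n :=
  PU (Equiv.swap a b) (fun p => if p = a then (-1 : ℂ) else 1)
    (by intro p; by_cases h : p = a <;> simp [h])
    (by rw [prod_ite_one, Equiv.Perm.sign_swap hab]; simp)

lemma conjMat_phaseSU_apply (j k : Fin n) (hjk : j ≠ k) (A : Mat n) (p q : Fin n) :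
    conjMat (phaseSU j k hjk) A p q =
      (if p = j then Complex.I else if p = k then -Complex.I else 1) * A p q *
        star (if q = j then Complex.I else if q = k then -Complex.I else 1) := by
  rw [phaseSU, conjMat_PU_apply]
  simp only [Equiv.Perm.coe_one, id_eq]
  rfl

lemma conjMat_swapSU_apply (a b : Fin n) (hab : a ≠ b) (A : Mat n) (p q : Fin n) :
    conjMat (swapSU a b hab) A p q =
      (if Equiv.swap a b p = a then (-1:ℂ) else 1) * A (Equiv.swap a b p) (Equiv.swap a b q) *
        star (if Equiv.swap a b q = a then (-1:ℂ) else 1) := by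
  rw [swapSU, conjMat_PU_apply]

/-- `phaseSU` fixes diagonal matrices `Dsu`. -/
lemma act_phaseSU_Dsu (j k : Fin n) (hjk : j ≠ k) (d : Fin n → ℝ) (h : ∑ i, d i = 0) :
    act (phaseSU j k hjk) (Dsu d h) = Dsu d h := by
  apply Subtype.ext
  show conjMat _ (Dmat d) = Dmat d
  ext p q
  rw [conjMat_phaseSU_apply]
  have unit_conj : ∀ z w : ℂ, z * star z = 1 → z * w * star z = w := by
    intro z w h
    calc z * w * star z = (z * star z) * w := by ring
    _ = w := by rw [h]; ring
  by_cases hpq : p = q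
  · subst hpq
    apply unit_conj
    have key : ∀ z : ℂ, z = Complex.I ∨ z = -Complex.I ∨ z = 1 → z * star z = 1 := by
      rintro z (rfl | rfl | rfl) <;>
        simp [Complex.star_def, Complex.conj_I, Complex.I_mul_I]
    apply key
    by_cases h1 : p = j
    · left; simp [h1]
    · by_cases h2 : p = k
      · right; left; subst h2; simp [h1]
      · right; right; simp [h1, h2]
  · have : Dmat d p q = 0 := by
      rw [Dmat]
      simp [Matrix.diagonal_apply_ne _ hpq]
    rw [this]
    ring

/-- `swapSU a b` maps `Dsu d` to `Dsu (d ∘ swap a b)`. -/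
lemma act_swapSU_Dsu (a b : Fin n) (hab : a ≠ b) (d : Fin n → ℝ) (h : ∑ i, d i = 0) :
    act (swapSU a b hab) (Dsu d h) =
      Dsu (fun p => d (Equiv.swap a b p)) (by rw [Equiv.sum_comp (Equiv.swap a b) d]; exact h) := by
  apply Subtype.ext
  show conjMat _ (Dmat d) = Dmat _
  ext p q
  rw [conjMat_swapSU_apply]
  by_cases hpq : p = q
  · subst hpq
    rw [Dmat, Dmat]
    simp only [Matrix.smul_apply, Matrix.diagonal_apply_eq, smul_eq_mul]
    by_cases h1 : Equiv.swap a b p = a <;> simp [h1] <;> ring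
  · have h2 : Dmat d (Equiv.swap a b p) (Equiv.swap a b q) = 0 := by
      rw [Dmat]
      simp [Matrix.diagonal_apply_ne _ (fun hc => hpq ((Equiv.swap a b).injective hc))]
    have h3 : Dmat (fun p => d (Equiv.swap a b p)) p q = 0 := by
      rw [Dmat]; simp [Matrix.diagonal_apply_ne _ hpq]
    rw [h2, h3]
    ring

/-- Diagonal entries of a conjugate by `swapSU`. -/
lemma conjMat_swapSU_diag (a b : Fin n) (hab : a ≠ b) (A : Mat n) (p : Fin n) :
    conjMat (swapSU a b hab) A p p = A (Equiv.swap a b p) (Equiv.swap a b p) := by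
  rw [conjMat_swapSU_apply]
  by_cases h1 : Equiv.swap a b p = a <;> simp [h1]

end Specials
section PsiHelpers

open Complex Equiv

variable {n : ℕ} {ψ : ↥(su n) × ↥(su n) → ↥(su n)}

lemma psi_zero_left (hψ : IsSymmBilEquivSU n ψ) (y : su n) : ψ (0, y) = 0 := by
  have h := hψ.2.2.1 0 0 y
  rw [zero_smul, zero_smul] at h
  exact h

lemma psi_zero_right (hψ : IsSymmBilEquivSU n ψ) (x : su n) : ψ (x, 0) = 0 := by
  rw [hψ.1]; exact psi_zero_left hψ x

lemma psi_neg_left (hψ : IsSymmBilEquivSU n ψ) (x y : su n) : ψ (-x, y) = -ψ (x, y) := by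
  have h := hψ.2.2.1 (-1) x y
  rw [neg_one_smul ℝ x, neg_one_smul ℝ (ψ (x,y))] at h
  exact h

lemma psi_neg_right (hψ : IsSymmBilEquivSU n ψ) (x y : su n) : ψ (x, -y) = -ψ (x, y) := by
  rw [hψ.1, psi_neg_left hψ, hψ.1]

lemma psi_sum_left (hψ : IsSymmBilEquivSU n ψ) {ι : Type*} (s : Finset ι)
    (f : ι → su n) (y : su n) : ψ (∑ k ∈ s, f k, y) = ∑ k ∈ s, ψ (f k, y) := by
  classical
  induction s using Finset.induction_on with
  | empty => simpa using psi_zero_left hψ y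
  | insert _ _ hk ih =>
      rw [Finset.sum_insert hk, Finset.sum_insert hk, hψ.2.1, ih]

lemma psi_sum_right (hψ : IsSymmBilEquivSU n ψ) {ι : Type*} (s : Finset ι)
    (x : su n) (f : ι → su n) : ψ (x, ∑ k ∈ s, f k) = ∑ k ∈ s, ψ (x, f k) := by
  rw [hψ.1, psi_sum_left hψ]
  exact Finset.sum_congr rfl fun k _ => hψ.1 _ _

/-- Values of `ψ` on pairs of diagonal elements are diagonal matrices. -/
lemma psi_Dsu_offdiag (hψ : IsSymmBilEquivSU n ψ) (d e : Fin n → ℝ)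
    (hd : ∑ i, d i = 0) (he : ∑ i, e i = 0) (p q : Fin n) (hpq : p ≠ q) :
    ((ψ (Dsu d hd, Dsu e he) : su n) : Mat n) p q = 0 := by
  have hU := hψ.2.2.2.2.2 (phaseSU p q hpq) (Dsu d hd) (Dsu e he)
  rw [act_phaseSU_Dsu, act_phaseSU_Dsu] at hU
  set a : ℂ := ((ψ (Dsu d hd, Dsu e he) : su n) : Mat n) p q with ha
  have h2 : a = Complex.I * a * Complex.I := by
    rw [ha]
    conv_lhs => rw [hU]
    show conjMat (phaseSU p q hpq) _ p q = _
    rw [conjMat_phaseSU_apply]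
    rw [if_pos rfl, if_neg (Ne.symm hpq), if_pos rfl]
    simp
  have h3 : Complex.I * a * Complex.I = -a := by
    have : Complex.I * a * Complex.I = Complex.I ^ 2 * a := by ring
    rw [this, Complex.I_sq]; ring
  rw [h3] at h2
  have h4 : a + a = 0 := by linear_combination h2
  exact add_self_eq_zero.mp h4

lemma gvec_comp_perm (σ : Equiv.Perm (Fin n)) (a b : Fin n) :
    (fun j => gvec a b (σ j)) = gvec (σ⁻¹ a) (σ⁻¹ b) := by
  funext j
  simp only [gvec]
  congr 2
  · simp only [eq_iff_iff]
    constructor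
    · intro h; rw [← h]; simp
    · intro h; rw [h]; simp
  · simp only [eq_iff_iff]
    constructor
    · intro h; rw [← h]; simp
    · intro h; rw [h]; simp

lemma Dsu_congr {d e : Fin n → ℝ} (h : d = e) (hd : ∑ i, d i = 0) (he : ∑ i, e i = 0) :
    Dsu d hd = Dsu e he := by subst h; rfl

lemma act_swapSU_Dg (u v : Fin n) (huv : u ≠ v) (a b : Fin n) :
    act (swapSU u v huv) (Dg a b) =
      Dg (Equiv.swap u v a) (Equiv.swap u v b) := by
  rw [Dg, act_swapSU_Dsu]
  rw [Dg]
  apply Dsu_congr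
  rw [gvec_comp_perm]
  rw [Equiv.swap_inv]

lemma Dmat_add (d e : Fin n → ℝ) : Dmat (d + e) = Dmat d + Dmat e := by
  unfold Dmat
  rw [← smul_add]
  congr 1
  ext j k
  by_cases h : j = k <;>
    simp [Matrix.diagonal_apply, h]

lemma Dg_split (a b c : Fin n) : Dg a c = Dg a b + Dg b c := by
  apply Subtype.ext
  show Dmat (gvec a c) = Dmat (gvec a b) + Dmat (gvec b c)
  have hg : gvec a c = gvec a b + gvec b c := by
    funext j
    simp only [gvec, Pi.add_apply]
    ring
  rw [hg, Dmat_add]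

end PsiHelpers
section Spectral

open Complex

variable {n : ℕ}

/-- Every element of `su n` is `SU(n)`-conjugate to a diagonal element. -/
lemma exists_diagonalization (hn : 0 < n) (Z : Mat n) (hZ : Z ∈ su n) :
    ∃ (U : SU n) (d : Fin n → ℝ) (h : ∑ j, d j = 0), Z = conjMat U (Dmat d) := by
  classical
  set H : Mat n := (-Complex.I) • Z with hH
  have hHerm : H.IsHermitian := by
    rw [Matrix.IsHermitian, hH, conjTranspose_smul, hZ.1]
    simp [Complex.star_def, Complex.conj_neg_I]
  set d : Fin n → ℝ := hHerm.eigenvalues with hd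
  set U₀ : Mat n := (hHerm.eigenvectorUnitary : Mat n) with hU₀
  have hU₀unit : U₀ * star U₀ = 1 := (Matrix.mem_unitaryGroup_iff).mp hHerm.eigenvectorUnitary.2
  have hU₀unit' : star U₀ * U₀ = 1 := (Matrix.mem_unitaryGroup_iff').mp hHerm.eigenvectorUnitary.2
  have hspec : H = U₀ * Matrix.diagonal (RCLike.ofReal ∘ d) * star U₀ := hHerm.spectral_theorem
  -- trace computation
  have htr : ∑ j, (d j : ℂ) = 0 := by
    have h1 : H.trace = 0 := by
      rw [hH, trace_smul, hZ.2, smul_zero]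
    have h2 : H.trace = ∑ j, (d j : ℂ) := by
      rw [hspec, Matrix.trace_mul_cycle, hU₀unit', Matrix.one_mul, Matrix.trace_diagonal]
      rfl
    rw [← h2, h1]
  have hsum : ∑ j, d j = 0 := by
    have : ((∑ j, d j : ℝ) : ℂ) = 0 := by push_cast; exact htr
    exact_mod_cast this
  -- determinant correction
  set c : ℂ := U₀.det with hc
  have hcunit : star c * c = 1 := by
    have := congrArg Matrix.det hU₀unit'
    rwa [Matrix.det_mul, Matrix.det_one, Matrix.star_eq_conjTranspose, Matrix.det_conjTranspose]
      at this
  set i0 : Fin n := ⟨0, hn⟩ with hi0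
  set ε : Fin n → ℂ := fun k => if k = i0 then star c else 1 with hε
  set V : Mat n := U₀ * Matrix.diagonal ε with hV
  have hεunit : ∀ k, ε k * star (ε k) = 1 := by
    intro k
    by_cases h : k = i0
    · simp only [hε, if_pos h, star_star]
      exact hcunit
    · simp [hε, h]
  have hVmem : V ∈ SU n := by
    rw [Matrix.mem_specialUnitaryGroup_iff]
    constructor
    · rw [Matrix.mem_unitaryGroup_iff, hV, Matrix.star_eq_conjTranspose, conjTranspose_mul,
        diagonal_conjTranspose]
      have : U₀ * Matrix.diagonal ε * (Matrix.diagonal (star ε) * U₀ᴴ)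
          = U₀ * (Matrix.diagonal ε * Matrix.diagonal (star ε)) * U₀ᴴ := by noncomm_ring
      rw [this, diagonal_mul_diagonal]
      have h1 : (fun i => ε i * star ε i) = fun _ => (1:ℂ) := by funext k; exact hεunit k
      rw [h1, Matrix.diagonal_one, Matrix.mul_one]
      exact hU₀unit
    · rw [hV, Matrix.det_mul, Matrix.det_diagonal, hε, prod_ite_one]
      have hgoal : c * star c = 1 := by rw [mul_comm]; exact hcunit
      exact hgoal
  refine ⟨⟨V, hVmem⟩, d, hsum, ?_⟩
  rw [conjMat, SU.inv_coe]
  show Z = V * Dmat d * star V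
  have hZH : Z = Complex.I • H := by
    rw [hH, smul_smul]
    have : Complex.I * -Complex.I = 1 := by
      rw [mul_neg, Complex.I_mul_I, neg_neg]
    rw [this, one_smul]
  set D : Mat n := Matrix.diagonal (RCLike.ofReal ∘ d) with hD
  have hDmat : Dmat d = Complex.I • D := rfl
  have hstarV : star V = Matrix.diagonal (star ε) * star U₀ := by
    rw [hV, Matrix.star_eq_conjTranspose, conjTranspose_mul, diagonal_conjTranspose,
      Matrix.star_eq_conjTranspose]
  have hDcomm : Matrix.diagonal ε * D * Matrix.diagonal (star ε) = D := by
    rw [hD, diagonal_mul_diagonal, diagonal_mul_diagonal]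
    refine congrArg Matrix.diagonal ?_
    funext k
    have h1 := hεunit k
    simp only [Pi.mul_apply, Pi.star_apply, Function.comp_apply]
    calc ε k * RCLike.ofReal (d k) * star (ε k)
        = (ε k * star (ε k)) * RCLike.ofReal (d k) := by ring
    _ = RCLike.ofReal (d k) := by rw [h1]; ring
  have hfinal : V * Dmat d * star V
      = Complex.I • (U₀ * (Matrix.diagonal ε * D * Matrix.diagonal (star ε)) * star U₀) := by
    rw [hV, hstarV, hDmat, Matrix.mul_smul, Matrix.smul_mul]
    congr 1
    noncomm_ring
  rw [hfinal, hDcomm, ← hspec]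
  exact hZH

end Spectral
section Key

open Complex Equiv

variable {n : ℕ}

lemma Dmat_smul (r : ℝ) (d : Fin n → ℝ) : Dmat (r • d) = r • Dmat d := by
  unfold Dmat
  rw [smul_comm]
  congr 1
  ext j k
  by_cases h : j = k <;> simp [Matrix.diagonal_apply, h, Complex.real_smul]

/-- `Dmat` as a linear map. -/
noncomputable def DmatL : (Fin n → ℝ) →ₗ[ℝ] Mat n where
  toFun := Dmat
  map_add' := Dmat_add
  map_smul' := Dmat_smul

lemma vec_eq_sum_gvec (p : Fin n) (x : Fin n → ℝ) (hx : ∑ i, x i = 0) :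
    x = ∑ k, x k • gvec k p := by
  funext j
  rw [Finset.sum_apply]
  simp only [Pi.smul_apply, gvec, smul_eq_mul, mul_sub]
  rw [Finset.sum_sub_distrib]
  have h1 : ∑ k, x k * (if j = k then (1:ℝ) else 0) = x j := by
    simp [mul_ite, Finset.sum_ite_eq]
  have h2 : ∑ k, x k * (if j = p then (1:ℝ) else 0) = 0 := by
    by_cases h : j = p
    · simp only [if_pos h, mul_one]; exact hx
    · simp [if_neg h]
  rw [h1, h2, sub_zero]

lemma key_vanish {ψ : ↥(su n) × ↥(su n) → ↥(su n)} (hψ : IsSymmBilEquivSU n ψ)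
    (p q : Fin n) (hpq : p ≠ q)
    (h0 : ∀ j, ((ψ (Dg p q, Dg p q) : su n) : Mat n) j j = 0) :
    ψ = 0 := by
  classical
  have hn : 0 < n := lt_of_le_of_lt (Nat.zero_le _) p.2
  -- values of `act` on entries
  have hact : ∀ (U : SU n) (z : su n), ((act U z : su n) : Mat n) = conjMat U (z : Mat n) :=
    fun U z => rfl
  -- Step B
  have hB : ∀ b, b ≠ p → ∀ j, ((ψ (Dg p b, Dg p b) : su n) : Mat n) j j = 0 := by
    intro b hb j
    by_cases hbq : b = q
    · subst hbq; exact h0 j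
    · have hqb : q ≠ b := fun h => hbq h.symm
      have hU := hψ.2.2.2.2.2 (swapSU q b hqb) (Dg p q) (Dg p q)
      rw [act_swapSU_Dg, Equiv.swap_apply_of_ne_of_ne hpq (Ne.symm hb),
        Equiv.swap_apply_left] at hU
      have := congrArg (fun z : su n => ((z : su n) : Mat n) j j) hU
      rw [this, hact, conjMat_swapSU_diag]
      exact h0 _
  -- Step C
  have hC : ∀ b c, b ≠ p → c ≠ p → b ≠ c →
      ∀ j, ((ψ (Dg p b, Dg p c) : su n) : Mat n) j j = 0 := by
    intro b c hb hc hbc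
    set t : Fin n → ℂ := fun j => ((ψ (Dg p b, Dg p c) : su n) : Mat n) j j with ht
    have hR1 : ∀ j, t j = ((ψ (Dg p b, Dg b c) : su n) : Mat n) j j := by
      intro j
      rw [ht]
      simp only []
      rw [Dg_split p b c, hψ.2.2.2.1]
      rw [Submodule.coe_add, Matrix.add_apply, hB b hb j, zero_add]
    have hpb : p ≠ b := Ne.symm hb
    have hR2 : ∀ j, t (Equiv.swap p b j) = - t j := by
      intro j
      have hU := hψ.2.2.2.2.2 (swapSU p b hpb) (Dg p b) (Dg p c)
      rw [act_swapSU_Dg, act_swapSU_Dg, Equiv.swap_apply_left, Equiv.swap_apply_right,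
        Equiv.swap_apply_of_ne_of_ne hc (Ne.symm hbc)] at hU
      rw [Dg_swap p b, psi_neg_left hψ] at hU
      have := congrArg (fun z : su n => ((z : su n) : Mat n) j j) hU
      rw [hact, conjMat_swapSU_diag] at this
      have hcoe : ((-ψ (Dg p b, Dg b c) : su n) : Mat n) j j
          = -((ψ (Dg p b, Dg b c) : su n) : Mat n) j j := by
        rw [Submodule.coe_neg, Matrix.neg_apply]
      rw [hcoe] at this
      rw [← hR1 j] at this
      exact this.symm
    have hR3 : ∀ j, t (Equiv.swap b c j) = t j := by
      intro j
      have hU := hψ.2.2.2.2.2 (swapSU b c hbc) (Dg p b) (Dg p c)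
      rw [act_swapSU_Dg, act_swapSU_Dg, Equiv.swap_apply_left, Equiv.swap_apply_right,
        Equiv.swap_apply_of_ne_of_ne (Ne.symm hb) (Ne.symm hc), hψ.1] at hU
      have := congrArg (fun z : su n => ((z : su n) : Mat n) j j) hU
      rw [hact, conjMat_swapSU_diag] at this
      exact this.symm
    have neg_self_zero : ∀ z : ℂ, z = -z → z = 0 := by
      intro z hz
      have : z + z = 0 := by linear_combination hz
      exact add_self_eq_zero.mp this
    have htc : t c = 0 := by
      have h1 := hR2 c
      rw [Equiv.swap_apply_of_ne_of_ne hc (Ne.symm hbc)] at h1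
      exact neg_self_zero _ h1
    have htb : t b = 0 := by
      have h3 := hR3 c
      rw [Equiv.swap_apply_right] at h3
      rw [htc] at h3
      exact h3
    have htp : t p = 0 := by
      have h2 := hR2 b
      rw [Equiv.swap_apply_right, htb] at h2
      rw [h2, neg_zero]
    intro j
    by_cases hj1 : j = p
    · rw [hj1]; exact htp
    · by_cases hj2 : j = b
      · rw [hj2]; exact htb
      · have h1 := hR2 j
        rw [Equiv.swap_apply_of_ne_of_ne hj1 hj2] at h1
        exact neg_self_zero _ h1
  -- all diagonal basis pairs
  have hterm : ∀ k l (j : Fin n), ((ψ (Dg k p, Dg l p) : su n) : Mat n) j j = 0 := by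
    intro k l j
    by_cases hk : k = p
    · rw [hk, Dg_self, psi_zero_left hψ]
      simp
    · by_cases hl : l = p
      · rw [hl, Dg_self, psi_zero_right hψ]
        simp
      · rw [Dg_swap p k, Dg_swap p l, psi_neg_left hψ, psi_neg_right hψ, neg_neg]
        by_cases hkl : k = l
        · rw [hkl]; exact hB l hl j
        · exact hC k l hk hl hkl j
  -- vanishing on all pairs of diagonal elements
  have hDiagZero : ∀ (x y : Fin n → ℝ) (hx : ∑ i, x i = 0) (hy : ∑ i, y i = 0),
      ψ (Dsu x hx, Dsu y hy) = 0 := by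
    intro x y hx hy
    have hxsum : Dsu x hx = ∑ k, x k • Dg k p := by
      apply Subtype.ext
      show Dmat x = _
      rw [Submodule.coe_sum]
      conv_lhs => rw [vec_eq_sum_gvec p x hx]
      rw [show (Dmat (∑ k, x k • gvec k p) : Mat n) = DmatL (∑ k, x k • gvec k p) from rfl]
      rw [map_sum]
      refine Finset.sum_congr rfl fun k _ => ?_
      rw [_root_.map_smul]
      rfl
    have hysum : Dsu y hy = ∑ l, y l • Dg l p := by
      apply Subtype.ext
      show Dmat y = _
      rw [Submodule.coe_sum]
      conv_lhs => rw [vec_eq_sum_gvec p y hy]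
      rw [show (Dmat (∑ l, y l • gvec l p) : Mat n) = DmatL (∑ l, y l • gvec l p) from rfl]
      rw [map_sum]
      refine Finset.sum_congr rfl fun l _ => ?_
      rw [_root_.map_smul]
      rfl
    have hexp : ψ (Dsu x hx, Dsu y hy) = ∑ k, ∑ l, (x k * y l) • ψ (Dg k p, Dg l p) := by
      rw [hxsum, hysum, psi_sum_left hψ]
      refine Finset.sum_congr rfl fun k _ => ?_
      rw [hψ.2.2.1, psi_sum_right hψ, Finset.smul_sum]
      refine Finset.sum_congr rfl fun l _ => ?_
      rw [hψ.2.2.2.2.1, smul_smul]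
    apply Subtype.ext
    show ((ψ (Dsu x hx, Dsu y hy) : su n) : Mat n) = 0
    ext j l
    by_cases hjl : j = l
    · subst hjl
      rw [hexp, Submodule.coe_sum, Matrix.sum_apply]
      rw [show (0 : Mat n) j j = 0 from rfl]
      refine Finset.sum_eq_zero fun k _ => ?_
      rw [Submodule.coe_sum, Matrix.sum_apply]
      refine Finset.sum_eq_zero fun m _ => ?_
      rw [SetLike.val_smul, Matrix.smul_apply, hterm k m j, smul_zero]
    · rw [psi_Dsu_offdiag hψ x y hx hy j l hjl]
      rfl
  -- vanishing of the quadratic form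
  have hQ : ∀ z : su n, ψ (z, z) = 0 := by
    intro z
    obtain ⟨U, d, hd, hZ⟩ := exists_diagonalization hn (z : Mat n) z.2
    have hz : z = act U (Dsu d hd) := by
      apply Subtype.ext
      exact hZ
    rw [hz, hψ.2.2.2.2.2, hDiagZero d d hd hd, act_zero]
  -- polarization
  funext w
  obtain ⟨x, y⟩ := w
  have hpol := hQ (x + y)
  rw [hψ.2.1, hψ.2.2.2.1, hψ.2.2.2.1, hψ.1 y x] at hpol
  have h2 : ψ (x, y) + ψ (x, y) = 0 := by
    have hx := hQ x
    have hy := hQ y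
    rw [hx, hy] at hpol
    rw [← hpol]
    abel
  have h2' : (2:ℝ) • ψ (x, y) = 0 := by rw [two_smul]; exact h2
  rcases smul_eq_zero.mp h2' with h | h
  · norm_num at h
  · rw [show (0 : ↥(su n) × ↥(su n) → ↥(su n)) (x, y) = 0 from rfl]
    exact h

end Key
section Psi0

open Complex

variable {n : ℕ}

/-- The matrix-level formula for the canonical equivariant symmetric bilinear map. -/
noncomputable def psi0Mat (n : ℕ) (x y : Mat n) : Mat n :=
  Complex.I • (x * y + y * x) - (Complex.I * (2 / (n:ℂ)) * (x * y).trace) • 1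

lemma real_smul_mat (r : ℝ) (M : Mat n) : r • M = ((r : ℂ)) • M := by
  ext i j
  simp [Complex.real_smul]

lemma trace_xy_conj {x y : Mat n} (hx : x ∈ su n) (hy : y ∈ su n) :
    star ((x * y).trace) = (x * y).trace := by
  rw [← Matrix.trace_conjTranspose, conjTranspose_mul, hx.1, hy.1, Matrix.neg_mul,
    Matrix.mul_neg, neg_neg, Matrix.trace_mul_comm]

lemma psi0Mat_mem (hn : (n:ℂ) ≠ 0) {x y : Mat n} (hx : x ∈ su n) (hy : y ∈ su n) :
    psi0Mat n x y ∈ su n := by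
  have ht := trace_xy_conj hx hy
  constructor
  · rw [psi0Mat, conjTranspose_sub, conjTranspose_smul, conjTranspose_add, conjTranspose_mul,
      conjTranspose_mul, hx.1, hy.1, conjTranspose_smul, conjTranspose_one]
    rw [neg_sub]
    have h1 : star Complex.I = -Complex.I := by simp [Complex.star_def, Complex.conj_I]
    have h2 : star (Complex.I * (2 / (n:ℂ)) * (x*y).trace)
        = -(Complex.I * (2 / (n:ℂ)) * (x*y).trace) := by
      rw [star_mul', star_mul', ht, h1]
      have : star ((2:ℂ) / (n:ℂ)) = (2:ℂ)/(n:ℂ) := by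
        rw [star_div₀, star_ofNat]
        norm_cast
      rw [this]
      ring
    rw [h1, h2]
    have h3 : ((-y) * (-x) + (-x) * (-y)) = (y * x + x * y) := by noncomm_ring
    rw [h3]
    rw [neg_smul, neg_smul, sub_neg_eq_add]
    have h4 : (y * x + x * y) = (x * y + y * x) := by abel
    rw [h4]
    abel
  · rw [psi0Mat, Matrix.trace_sub, Matrix.trace_smul, Matrix.trace_add, Matrix.trace_smul,
      Matrix.trace_one, Fintype.card_fin]
    rw [Matrix.trace_mul_comm y x]
    field_simp
    rw [smul_eq_mul, smul_eq_mul, div_mul_cancel₀ _ hn]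
    ring

/-- The canonical equivariant symmetric bilinear map on `su n`. -/
noncomputable def psi0 (n : ℕ) (hn : (n:ℂ) ≠ 0) : ↥(su n) × ↥(su n) → ↥(su n) :=
  fun w => ⟨psi0Mat n (w.1 : Mat n) (w.2 : Mat n), psi0Mat_mem hn w.1.2 w.2.2⟩

lemma psi0_mem (hn : (n:ℂ) ≠ 0) : psi0 n hn ∈ EquivBilSpaceSU n := by
  refine ⟨?_, ?_, ?_, ?_, ?_, ?_⟩
  · -- symmetry
    intro x y
    apply Subtype.ext
    show psi0Mat n x.1 y.1 = psi0Mat n y.1 x.1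
    rw [psi0Mat, psi0Mat, Matrix.trace_mul_comm]
    congr 1
    rw [add_comm]
  · -- additivity left
    intro x x' y
    apply Subtype.ext
    show psi0Mat n (x.1 + x'.1) y.1 = psi0Mat n x.1 y.1 + psi0Mat n x'.1 y.1
    rw [psi0Mat, psi0Mat, psi0Mat, Matrix.add_mul, Matrix.mul_add, Matrix.trace_add]
    rw [mul_add, add_smul]
    simp only [smul_add]
    abel
  · -- smul left
    intro r x y
    apply Subtype.ext
    show psi0Mat n (r • x.1) y.1 = r • psi0Mat n x.1 y.1
    rw [psi0Mat, psi0Mat, Matrix.smul_mul, Matrix.mul_smul, ← smul_add, Matrix.trace_smul]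
    rw [real_smul_mat r (x.1 * y.1 + y.1 * x.1), smul_comm, Complex.real_smul]
    have h1 : Complex.I * (2 / (n:ℂ)) * ((r:ℂ) * (x.1 * y.1).trace)
        = (r:ℂ) * (Complex.I * (2 / (n:ℂ)) * (x.1 * y.1).trace) := by ring
    rw [h1, mul_smul, ← smul_sub, ← real_smul_mat]
  · -- additivity right
    intro x y y'
    apply Subtype.ext
    show psi0Mat n x.1 (y.1 + y'.1) = psi0Mat n x.1 y.1 + psi0Mat n x.1 y'.1
    rw [psi0Mat, psi0Mat, psi0Mat, Matrix.add_mul, Matrix.mul_add, Matrix.trace_add]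
    rw [mul_add, add_smul]
    simp only [smul_add]
    abel
  · -- smul right
    intro r x y
    apply Subtype.ext
    show psi0Mat n x.1 (r • y.1) = r • psi0Mat n x.1 y.1
    rw [psi0Mat, psi0Mat, Matrix.smul_mul, Matrix.mul_smul, ← smul_add, Matrix.trace_smul]
    rw [real_smul_mat r (x.1 * y.1 + y.1 * x.1), smul_comm, Complex.real_smul]
    have h1 : Complex.I * (2 / (n:ℂ)) * ((r:ℂ) * (x.1 * y.1).trace)
        = (r:ℂ) * (Complex.I * (2 / (n:ℂ)) * (x.1 * y.1).trace) := by ring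
    rw [h1, mul_smul, ← smul_sub, ← real_smul_mat]
  · -- equivariance
    intro U x y
    apply Subtype.ext
    show psi0Mat n (conjMat U x.1) (conjMat U y.1) = conjMat U (psi0Mat n x.1 y.1)
    have hUi : (U : Mat n) * star (U : Mat n) = 1 := by
      rw [mul_eq_one_comm]; exact SU.star_mul_self U
    have hkey : ∀ A B : Mat n, conjMat U A * conjMat U B = conjMat U (A * B) := by
      intro A B
      rw [conjMat, conjMat, conjMat, SU.inv_coe]
      calc (U : Mat n) * A * star (U : Mat n) * ((U : Mat n) * B * star (U : Mat n))
          = (U : Mat n) * A * (star (U : Mat n) * (U : Mat n)) * B * star (U : Mat n) := by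
            noncomm_ring
      _ = (U : Mat n) * (A * B) * star (U : Mat n) := by
            rw [SU.star_mul_self U]; noncomm_ring
    have htrace : ∀ A : Mat n, (conjMat U A).trace = A.trace := by
      intro A
      rw [conjMat, SU.inv_coe, Matrix.trace_mul_cycle, SU.star_mul_self U, Matrix.one_mul]
    have hsmul : ∀ (c : ℂ) (A : Mat n), conjMat U (c • A) = c • conjMat U A := by
      intro c A
      rw [conjMat, conjMat, Matrix.mul_smul, Matrix.smul_mul]
    have hsub : ∀ A B : Mat n, conjMat U (A - B) = conjMat U A - conjMat U B := by
      intro A B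
      rw [conjMat, conjMat, conjMat, Matrix.mul_sub, Matrix.sub_mul]
    have hadd : ∀ A B : Mat n, conjMat U (A + B) = conjMat U A + conjMat U B := by
      intro A B
      rw [conjMat, conjMat, conjMat, Matrix.mul_add, Matrix.add_mul]
    have hone : conjMat U (1 : Mat n) = 1 := by
      rw [conjMat, SU.inv_coe, Matrix.mul_one, hUi]
    rw [psi0Mat, psi0Mat, hsub, hsmul, hadd, hkey, hkey, hsmul, hone, htrace]

lemma psi0_value (hn : (n:ℂ) ≠ 0) (p q : Fin n) (hpq : p ≠ q) (r : Fin n)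
    (hrp : r ≠ p) (hrq : r ≠ q) :
    ((psi0 n hn (Dg p q, Dg p q) : su n) : Mat n) r r = 4 * Complex.I / (n:ℂ) := by
  show psi0Mat n (Dmat (gvec p q)) (Dmat (gvec p q)) r r = _
  have hsq : Dmat (gvec p q) * Dmat (gvec p q)
      = -Matrix.diagonal (fun j => ((gvec p q j : ℂ))^2) := by
    rw [Dmat, Matrix.smul_mul, Matrix.mul_smul, smul_smul, Complex.I_mul_I,
      diagonal_mul_diagonal]
    rw [neg_smul, one_smul]
    congr 1
    funext j
    ring
  have htr : (Dmat (gvec p q) * Dmat (gvec p q)).trace = -2 := by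
    rw [hsq, Matrix.trace_neg, Matrix.trace_diagonal]
    have hval : ∀ j, ((gvec p q j : ℂ))^2
        = (if j = p then 1 else 0) + (if j = q then 1 else 0) := by
      intro j
      by_cases h1 : j = p
      · subst h1
        rw [if_pos rfl, if_neg hpq]
        simp [gvec, hpq]
      · by_cases h2 : j = q
        · subst h2
          rw [if_neg h1, if_pos rfl]
          simp [gvec, h1]
        · rw [if_neg h1, if_neg h2]
          simp [gvec, h1, h2]
    rw [Finset.sum_congr rfl (fun j _ => hval j)]
    rw [Finset.sum_add_distrib]
    simp
    norm_num
  rw [psi0Mat, htr]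
  rw [Matrix.sub_apply, Matrix.smul_apply, Matrix.add_apply, hsq]
  have hgr : (gvec p q r : ℂ) = 0 := by
    simp [gvec, hrp, hrq]
  rw [Matrix.neg_apply, Matrix.diagonal_apply_eq, hgr]
  rw [Matrix.smul_apply, Matrix.one_apply_eq]
  simp only [smul_eq_mul]
  field_simp
  ring

end Psi0
section Final

open Complex Equiv

variable {n : ℕ}

lemma act_coe (U : SU n) (z : su n) : ((act U z : su n) : Mat n) = conjMat U (z : Mat n) := rfl

lemma diag_entries_zero {ψ : ↥(su n) × ↥(su n) → ↥(su n)} (hψ : IsSymmBilEquivSU n ψ)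
    (p q : Fin n) (hpq : p ≠ q)
    (hoff : ∀ j, j ≠ p → j ≠ q → ((ψ (Dg p q, Dg p q) : su n) : Mat n) j j = 0) :
    ∀ j, ((ψ (Dg p q, Dg p q) : su n) : Mat n) j j = 0 := by
  classical
  set t : Fin n → ℂ := fun j => ((ψ (Dg p q, Dg p q) : su n) : Mat n) j j with ht
  have hsym : ∀ j, t j = t (Equiv.swap p q j) := by
    intro j
    have hU := hψ.2.2.2.2.2 (swapSU p q hpq) (Dg p q) (Dg p q)
    rw [act_swapSU_Dg, Equiv.swap_apply_left, Equiv.swap_apply_right] at hU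
    rw [Dg_swap p q, psi_neg_left hψ, psi_neg_right hψ, neg_neg] at hU
    have h3 := congrArg (fun z : su n => ((z : su n) : Mat n) j j) hU
    rw [act_coe, conjMat_swapSU_diag] at h3
    exact h3
  have htr : ∑ j, t j = 0 := by
    have h2 := (ψ (Dg p q, Dg p q)).2.2
    simpa [Matrix.trace, Matrix.diag] using h2
  have hpair : t p + t q = 0 := by
    have hsub : ∑ j ∈ ({p, q} : Finset (Fin n)), t j = ∑ j, t j := by
      apply Finset.sum_subset (Finset.subset_univ _)
      intro x _ hx
      simp only [Finset.mem_insert, Finset.mem_singleton] at hx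
      push_neg at hx
      exact hoff x hx.1 hx.2
    rw [Finset.sum_pair hpq] at hsub
    rw [hsub, htr]
  have htp : t p = 0 := by
    have h1 := hsym p
    rw [Equiv.swap_apply_left] at h1
    rw [← h1] at hpair
    have h4 : (2:ℂ) * t p = 0 := by linear_combination hpair
    rcases mul_eq_zero.mp h4 with h | h
    · norm_num at h
    · exact h
  have htq : t q = 0 := by
    have h1 := hsym p
    rw [Equiv.swap_apply_left] at h1
    rw [← h1, htp]
  intro j
  by_cases hj1 : j = p
  · rw [hj1]; exact htp
  · by_cases hj2 : j = q
    · rw [hj2]; exact htq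
    · exact hoff j hj1 hj2

end Final
/-- For `n ≥ 2`, the real vector space of symmetric ℝ-bilinear
`SU(n)`-equivariant maps `su(n) × su(n) → su(n)` has dimension `0` if `n = 2` and
dimension `1` if `n ≥ 3`. -/
theorem dim_equivariant_symmetric_bilinear_su (n : ℕ) (hn : 2 ≤ n) :
    Module.finrank ℝ (EquivBilSpaceSU n) = if n = 2 then 0 else 1 := by
  classical
  by_cases h2 : n = 2
  · subst h2
    rw [if_pos rfl]
    have hbot : EquivBilSpaceSU 2 = ⊥ := by
      rw [eq_bot_iff]
      intro ψ hmem
      have hψ : IsSymmBilEquivSU 2 ψ := hmem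
      have h01 : (0 : Fin 2) ≠ 1 := by decide
      have hoff : ∀ j : Fin 2, j ≠ 0 → j ≠ 1 →
          ((ψ (Dg 0 1, Dg 0 1) : su 2) : Mat 2) j j = 0 := by
        intro j hj0 hj1
        exfalso
        have hlt := j.isLt
        have hv0 : j.val ≠ 0 := fun h => hj0 (Fin.ext h)
        have hv1 : j.val ≠ 1 := fun h => hj1 (Fin.ext h)
        omega
      have h0 := diag_entries_zero hψ 0 1 h01 hoff
      have hz := key_vanish hψ 0 1 h01 h0
      rw [Submodule.mem_bot]
      exact hz
    rw [hbot]
    exact finrank_bot ℝ _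
  · rw [if_neg h2]
    have hn3 : 3 ≤ n := by omega
    have hnC : (n : ℂ) ≠ 0 := by
      simp only [ne_eq, Nat.cast_eq_zero]
      omega
    set p0 : Fin n := ⟨0, by omega⟩ with hp0
    set p1 : Fin n := ⟨1, by omega⟩ with hp1
    set p2 : Fin n := ⟨2, by omega⟩ with hp2
    have h01 : p0 ≠ p1 := by simp [hp0, hp1, Fin.ext_iff]
    have h20 : p2 ≠ p0 := by simp [hp0, hp2, Fin.ext_iff]
    have h21 : p2 ≠ p1 := by simp [hp1, hp2, Fin.ext_iff]
    have hval := psi0_value hnC p0 p1 h01 p2 h20 h21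
    have hIne : 4 * Complex.I / (n:ℂ) ≠ 0 := by
      apply div_ne_zero _ hnC
      simp [Complex.I_ne_zero]
    have hpsine : psi0 n hnC ≠ 0 := by
      intro hzero
      rw [hzero] at hval
      have hz : (0:ℂ) = 4 * Complex.I / (n:ℂ) := by
        rw [← hval]
        rfl
      exact hIne hz.symm
    have hspan : EquivBilSpaceSU n = Submodule.span ℝ {psi0 n hnC} := by
      apply le_antisymm
      · intro ψ hmem
        have hψ : IsSymmBilEquivSU n ψ := hmem
        set t : ℂ := ((ψ (Dg p0 p1, Dg p0 p1) : su n) : Mat n) p2 p2 with htdef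
        have htre : t.re = 0 := by
          have hsk := (ψ (Dg p0 p1, Dg p0 p1)).2.1
          have h3 := congrArg (fun M : Mat n => M p2 p2) hsk
          simp only [conjTranspose_apply, Matrix.neg_apply] at h3
          have hre := congrArg Complex.re h3
          simp only [Complex.neg_re] at hre
          rw [show (star (((ψ (Dg p0 p1, Dg p0 p1) : su n) : Mat n) p2 p2)).re
              = (((ψ (Dg p0 p1, Dg p0 p1) : su n) : Mat n) p2 p2).re from Complex.conj_re _] at hre
          rw [htdef]
          linarith
        set c : ℝ := t.im * n / 4 with hcdef
        set φ : ↥(su n) × ↥(su n) → ↥(su n) := ψ - c • psi0 n hnC with hφ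
        have hφmem : φ ∈ EquivBilSpaceSU n :=
          Submodule.sub_mem _ hmem (Submodule.smul_mem _ c (psi0_mem hnC))
        have hφψ : IsSymmBilEquivSU n φ := hφmem
        have hφentry : ((φ (Dg p0 p1, Dg p0 p1) : su n) : Mat n) p2 p2 = 0 := by
          rw [hφ]
          simp only [Pi.sub_apply, Pi.smul_apply]
          rw [AddSubgroupClass.coe_sub, Matrix.sub_apply, SetLike.val_smul, Matrix.smul_apply]
          rw [hval, ← htdef]
          rw [Complex.real_smul]
          have hT : t = (t.im : ℂ) * Complex.I := by
            apply Complex.ext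
            · simp [htre]
            · simp
          have hcC : ((c:ℝ) : ℂ) = (t.im : ℂ) * (n:ℂ) / 4 := by
            rw [hcdef]
            push_cast
            ring
          have hprod : ((t.im : ℂ) * (n:ℂ) / 4) * (4 * Complex.I / (n:ℂ))
              = (t.im : ℂ) * Complex.I := by
            field_simp
          rw [hcC, hprod]
          linear_combination hT
        have hoff : ∀ j, j ≠ p0 → j ≠ p1 →
            ((φ (Dg p0 p1, Dg p0 p1) : su n) : Mat n) j j = 0 := by
          intro j hj0 hj1
          by_cases hj2 : j = p2
          · rw [hj2]; exact hφentry
          · have hU := hφψ.2.2.2.2.2 (swapSU p2 j (fun h => hj2 h.symm)) (Dg p0 p1) (Dg p0 p1)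
            rw [act_swapSU_Dg, Equiv.swap_apply_of_ne_of_ne (Ne.symm h20) (fun h => hj0 h.symm),
              Equiv.swap_apply_of_ne_of_ne (Ne.symm h21) (fun h => hj1 h.symm)] at hU
            have h3 := congrArg (fun z : su n => ((z : su n) : Mat n) j j) hU
            rw [act_coe, conjMat_swapSU_diag, Equiv.swap_apply_right] at h3
            rw [h3]
            exact hφentry
        have hzero := key_vanish hφψ p0 p1 h01 (diag_entries_zero hφψ p0 p1 h01 hoff)
        have hψeq : ψ = c • psi0 n hnC := by
          rw [hφ] at hzero
          exact sub_eq_zero.mp hzero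
        rw [hψeq]
        exact Submodule.smul_mem _ _ (Submodule.mem_span_singleton_self _)
      · rw [Submodule.span_singleton_le_iff_mem]
        exact psi0_mem hnC
    rw [hspan]
    exact finrank_span_singleton hpsine
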